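/- arXiv:2207.01988 — 4 statements merged into one kernel-verified Lean document; each statement's English description precedes it below -/
import Mathlib

section
/- Let c ∈ (0,1) with c ≠ 1/2, let α ∈ (0,1), and let (X_n)_{n≥1} be i.i.d. Bernoulli(c). For t ≥ 1 let ĉ_t := (1/t)·∑_{i=1}^t X_i, and define the Chernoff stopping time τ := inf{ t ≥ 2 : t · d(ĉ_t, 1/2) > log(2t/α) }, where by convention d(0, 1/2) := log 2 and d(1, 1/2) := log 2. Then the probability that the final decision is wrong satisfies P( τ < ∞ and 𝟙(ĉ_τ > 1/2) ≠ 𝟙(c > 1/2) ) ≤ α. -/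
open MeasureTheory ProbabilityTheory
open scoped ENNReal

/-- KL divergence between Bernoulli(p) and Bernoulli(q) (natural logarithm).
Note that with Lean's conventions `klBer 0 (1/2) = klBer 1 (1/2) = Real.log 2`,
matching the paper's convention `d(0,1/2) = d(1,1/2) = log 2`. -/
noncomputable def klBer (p q : ℝ) : ℝ :=
  p * Real.log (p / q) + (1 - p) * Real.log ((1 - p) / (1 - q))

/-- Bernoulli(p) distribution on `ℝ` (mass `p` at `1` and `1-p` at `0`). -/
noncomputable def bern (p : ℝ) : MeasureTheory.Measure ℝ :=
  (ENNReal.ofReal p) • MeasureTheory.Measure.dirac 1 +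
    (ENNReal.ofReal (1 - p)) • MeasureTheory.Measure.dirac 0

/-- Empirical mean `ĉ_t = (1/t) ∑_{i=1}^t X_i`. -/
noncomputable def empMean {Ω : Type*} (X : ℕ → Ω → ℝ) (t : ℕ) (ω : Ω) : ℝ :=
  (1 / (t : ℝ)) * ∑ i ∈ Finset.Icc 1 t, X i ω

/-- Chernoff stopping time `τ = inf{ t ≥ 2 : t d(ĉ_t, 1/2) > log (2t/α) }`
(`⊤` if no such `t` exists). -/
noncomputable def chernoffTau {Ω : Type*} (X : ℕ → Ω → ℝ) (α : ℝ) (ω : Ω) : ℕ∞ :=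
  sInf {t : ℕ∞ | ∃ n : ℕ, t = (n : ℕ∞) ∧ 2 ≤ n ∧
    Real.log (2 * n / α) < (n : ℝ) * klBer (empMean X n ω) (1/2)}
/-!
Whether the rule stops at time `n` with a wrong decision depends only on the first `n`
observations, and the strings of observations on which this happens form a prefix-free set: no
proper prefix of such a string makes the rule stop. If such a string has `k` ones, the decision is on the wrong side of `1/2`, so
`c^k (1-c)^(n-k) ≤ 2^{-n}`. Since `n·d(k/n, 1/2) = log (2^n (k/n)^k (1-k/n)^(n-k))` and
`C(n,k) (k/n)^k (1-k/n)^(n-k) ≤ 1`, the threshold `log (2n/α)` turns this into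
`c^k (1-c)^(n-k) ≤ α / ((n+1) C(n,k)) = α ∫₀¹ p^k (1-p)^(n-k) dp`, i.e. `α` times the
probability of the string when the coin's bias is drawn uniformly. The mixture probabilities of a
prefix-free set of strings add up to at most `1`, so the union bound gives `α`.
-/

open Finset Real

theorem Fin.take_snoc {α : Type*} {n m : ℕ} (h : m ≤ n) (w : Fin n → α) (b : α) :
    Fin.take m (h.trans n.le_succ) (Fin.snoc w b : Fin (n + 1) → α) = Fin.take m h w := by
  ext i
  simp [Fin.take, Fin.snoc, i.2.trans_le h]
  rfl

theorem Finset.sum_Icc_one_eq_sum_fin {M : Type*} [AddCommMonoid M] (f : ℕ → M) (n : ℕ) :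
    ∑ i ∈ Icc 1 n, f i = ∑ i : Fin n, f (i + 1) := by
  rw [Fin.sum_univ_eq_sum_range (fun i => f (i + 1)), range_eq_Ico, sum_Ico_add', zero_add,
    Ico_add_one_right_eq_Icc]

theorem isLeast_of_sInf_eq_natCast {p : ℕ → Prop} {n : ℕ}
    (h : sInf {t : ℕ∞ | ∃ m : ℕ, t = m ∧ p m} = n) : IsLeast {m | p m} n := by
  have hne : {t : ℕ∞ | ∃ m : ℕ, t = m ∧ p m}.Nonempty :=
    Set.nonempty_iff_ne_empty.mpr fun he => by simp [he] at h
  obtain ⟨m, hm, hpm⟩ := h ▸ csInf_mem hne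
  refine ⟨by rwa [Nat.cast_inj.mp hm], fun m hpm => ?_⟩
  have hle : sInf {t : ℕ∞ | ∃ m : ℕ, t = m ∧ p m} ≤ m := sInf_le ⟨m, rfl, hpm⟩
  exact_mod_cast h ▸ hle

namespace ChernoffStopping

section PrefixFree

variable {β : Type*}

def PrefixFree (S : ∀ n, Finset (Fin n → β)) : Prop :=
  ∀ ⦃m n : ℕ⦄ (h : m < n) ⦃w : Fin n → β⦄, w ∈ S n → Fin.take m h.le w ∉ S m

variable [DecidableEq β]

theorem card_filter_take_mem_le_one {S : ∀ n, Finset (Fin n → β)} (hS : PrefixFree S) {N : ℕ}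
    (u : Fin N → β) : #{n : Fin (N + 1) | Fin.take n n.is_le u ∈ S n} ≤ 1 := by
  refine card_le_one.mpr fun m hm n hn => ?_
  simp only [mem_filter, mem_univ, true_and] at hm hn
  by_contra hmn
  rcases lt_or_gt_of_ne hmn with h | h
  · exact hS h hn hm
  · exact hS h hm hn

variable [Fintype β] {f : ∀ n, (Fin n → β) → ℝ≥0∞}

theorem sum_filter_take_eq (hf : ∀ n (v : Fin n → β), ∑ b, f (n + 1) (Fin.snoc v b) = f n v)
    {n N : ℕ} (h : n ≤ N) (v : Fin n → β) :
    ∑ u : Fin N → β with Fin.take n h u = v, f N u = f n v := by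
  induction N, h using Nat.le_induction with
  | base => simp [filter_eq']
  | succ N hN ih =>
    rw [← ih, sum_filter, sum_filter, ← (Fin.snocEquiv fun _ => β).sum_comp,
      Fintype.sum_prod_type, sum_comm]
    refine sum_congr rfl fun w _ => ?_
    simp only [Fin.snocEquiv, Equiv.coe_fn_mk, Fin.take_snoc hN]
    split_ifs <;> simp [hf]

theorem sum_sum_le_of_prefixFree
    (hf : ∀ n (v : Fin n → β), ∑ b, f (n + 1) (Fin.snoc v b) = f n v)
    {S : ∀ n, Finset (Fin n → β)} (hS : PrefixFree S) (N : ℕ) :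
    ∑ n : Fin (N + 1), ∑ v ∈ S n, f n v ≤ f 0 Fin.elim0 :=
  -- Double counting over the strings of length `N`: each has at most one prefix in `S`.
  calc ∑ n : Fin (N + 1), ∑ v ∈ S n, f n v
      = ∑ n : Fin (N + 1),
          ∑ u : Fin N → β with (Fin.take n n.is_le u : Fin n → β) ∈ S n, f N u := by
        refine sum_congr rfl fun n _ => ?_
        rw [← sum_fiberwise_of_maps_to (g := fun u : Fin N → β => Fin.take n n.is_le u)
          (fun u hu => (mem_filter.mp hu).2)]
        refine sum_congr rfl fun v hv => ?_
        rw [filter_filter, ← sum_filter_take_eq hf n.is_le v]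
        congr 1
        ext u
        simp +contextual [hv]
    _ = ∑ u : Fin N → β,
          ∑ n ∈ univ.filter fun n : Fin (N + 1) => Fin.take n n.is_le u ∈ S n, f N u := by
        simp only [sum_filter]
        exact sum_comm
    _ ≤ ∑ u : Fin N → β, f N u := by
        refine sum_le_sum fun u _ => ?_
        obtain ⟨n, hn⟩ := card_le_one_iff_subset_singleton.mp (card_filter_take_mem_le_one hS u)
        exact (sum_le_sum_of_subset hn).trans_eq (sum_singleton _ _)
    _ = f 0 Fin.elim0 := by
        simpa [Subsingleton.elim _ (Fin.elim0 : Fin 0 → β)] using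
          sum_filter_take_eq hf N.zero_le Fin.elim0

theorem tsum_sum_le_of_prefixFree
    (hf : ∀ n (v : Fin n → β), ∑ b, f (n + 1) (Fin.snoc v b) = f n v)
    {S : ∀ n, Finset (Fin n → β)} (hS : PrefixFree S) :
    ∑' n, ∑ v ∈ S n, f n v ≤ f 0 Fin.elim0 := by
  refine ENNReal.tsum_le_of_sum_range_le fun N => ?_
  calc ∑ n ∈ range N, ∑ v ∈ S n, f n v ≤ ∑ n ∈ range (N + 1), ∑ v ∈ S n, f n v :=
        sum_le_sum_of_subset (range_subset_range.mpr N.le_succ)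
    _ = ∑ n : Fin (N + 1), ∑ v ∈ S n, f n v := (Fin.sum_univ_eq_sum_range _ _).symm
    _ ≤ f 0 Fin.elim0 := sum_sum_le_of_prefixFree hf hS N

end PrefixFree

/-- `∫₀¹ p^k (1-p)^(n-k) dp`, the probability of a fixed binary string of length `n` with `k`
ones when the bias of the coin is drawn uniformly from `[0, 1]`. -/
noncomputable def betaWeight (n k : ℕ) : ℝ := ((n + 1) * n.choose k : ℝ)⁻¹

theorem betaWeight_pos {n k : ℕ} (hk : k ≤ n) : 0 < betaWeight n k := by
  have := Nat.choose_pos hk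
  unfold betaWeight
  positivity

theorem betaWeight_succ_add_betaWeight_succ {n k : ℕ} (hk : k ≤ n) :
    betaWeight (n + 1) k + betaWeight (n + 1) (k + 1) = betaWeight n k := by
  have hC : (0 : ℝ) < n.choose k := by exact_mod_cast Nat.choose_pos hk
  have hkn : (k : ℝ) < n + 1 := by exact_mod_cast Nat.lt_succ_of_le hk
  have h₁ : ((n + 1).choose (k + 1) : ℝ) = (n + 1) * n.choose k / (k + 1) := by
    rw [eq_div_iff (by positivity)]
    exact_mod_cast (Nat.add_one_mul_choose_eq n k).symm
  have h₂ : ((n + 1).choose k : ℝ) = (n + 1) * n.choose k / (n + 1 - k) := by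
    rw [eq_div_iff (by linarith), mul_comm]
    have := Nat.choose_mul_succ_eq n k
    rw [← Nat.cast_inj (R := ℝ)] at this
    push_cast [Nat.cast_sub (by omega : k ≤ n + 1)] at this
    linarith
  simp only [betaWeight, Nat.cast_add, Nat.cast_one, h₁, h₂]
  field_simp
  ring

theorem empirical_pow_mul_one_sub_pow_pos {n k : ℕ} (hk : k ≤ n) :
    0 < ((k : ℝ) / n) ^ k * (1 - k / n) ^ (n - k) := by
  rcases Nat.eq_zero_or_pos k with rfl | hk₀
  · simp
  rcases hk.eq_or_lt with rfl | hkn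
  · simp [div_self (Nat.cast_pos.mpr hk₀ : (0 : ℝ) < k).ne']
  have hx₀ : (0 : ℝ) < k / n :=
    div_pos (by exact_mod_cast hk₀) (by exact_mod_cast hk₀.trans hkn)
  have hx₁ : (0 : ℝ) < 1 - k / n := by
    rw [sub_pos, div_lt_one (by exact_mod_cast hk₀.trans hkn)]
    exact_mod_cast hkn
  exact mul_pos (pow_pos hx₀ _) (pow_pos hx₁ _)

theorem natCast_mul_klBer {q : ℝ} (hq₀ : 0 < q) (hq₁ : q < 1) {n k : ℕ} (hk : k ≤ n) :
    n * klBer (k / n) q =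
      log ((k / n) ^ k * (1 - k / n) ^ (n - k)) - log (q ^ k * (1 - q) ^ (n - k)) := by
  rcases n.eq_zero_or_pos with rfl | hn
  · simp [show k = 0 by omega, klBer]
  set x : ℝ := k / n with hx
  have hnx : (n : ℝ) * x = k := by rw [hx]; field_simp
  have hnx' : (n : ℝ) * (1 - x) = (n - k : ℕ) := by push_cast [Nat.cast_sub hk]; linarith
  have hpos : 0 < x ^ k * (1 - x) ^ (n - k) := empirical_pow_mul_one_sub_pow_pos hk
  have hxk : x ^ k ≠ 0 := left_ne_zero_of_mul hpos.ne'
  have hxk' : (1 - x) ^ (n - k) ≠ 0 := right_ne_zero_of_mul hpos.ne'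
  have mul_log_div : ∀ (m : ℕ) {y r : ℝ}, y ^ m ≠ 0 → r ≠ 0 →
      (m : ℝ) * log (y / r) = log (y ^ m) - log (r ^ m) := by
    intro m y r hy hr
    rcases eq_or_ne m 0 with rfl | hm
    · simp
    · rw [log_pow, log_pow, log_div (ne_zero_pow hm hy) hr]
      ring
  rw [log_mul hxk hxk', log_mul (by positivity) (pow_ne_zero _ (by linarith)), klBer,
    mul_add, ← mul_assoc, ← mul_assoc, hnx, hnx', mul_log_div k hxk hq₀.ne',
    mul_log_div (n - k) hxk' (by linarith)]
  ring

theorem pow_mul_one_sub_pow_le_half_pow {c : ℝ} (hc : 1 / 2 ≤ c) (hc₁ : c ≤ 1) {n k : ℕ}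
    (hk : 2 * k ≤ n) : c ^ k * (1 - c) ^ (n - k) ≤ (1 / 2) ^ n :=
  calc c ^ k * (1 - c) ^ (n - k) = (c * (1 - c)) ^ k * (1 - c) ^ (n - 2 * k) := by
        rw [mul_pow, mul_assoc, ← pow_add]
        congr 2
        omega
    _ ≤ ((1 / 2) ^ 2) ^ k * (1 / 2) ^ (n - 2 * k) := by
        gcongr
        · nlinarith
        · linarith
    _ = (1 / 2) ^ n := by rw [← pow_mul, ← pow_add]; congr 1; omega

theorem choose_mul_pow_mul_one_sub_pow_le_one {x : ℝ} (hx₀ : 0 ≤ x) (hx₁ : x ≤ 1)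
    {n k : ℕ} (hk : k ≤ n) : n.choose k * (x ^ k * (1 - x) ^ (n - k)) ≤ 1 := by
  have hsum := add_pow x (1 - x) n
  rw [add_sub_cancel, one_pow] at hsum
  have h₁ : 0 ≤ 1 - x := by linarith
  calc n.choose k * (x ^ k * (1 - x) ^ (n - k)) = x ^ k * (1 - x) ^ (n - k) * n.choose k := by
        ring
    _ ≤ ∑ j ∈ Finset.range (n + 1), x ^ j * (1 - x) ^ (n - j) * n.choose j :=
        Finset.single_le_sum (f := fun j => x ^ j * (1 - x) ^ (n - j) * n.choose j)
          (fun j _ => by positivity) (Finset.mem_range.mpr (Nat.lt_succ_of_le hk))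
    _ = 1 := hsum.symm

theorem pow_mul_one_sub_pow_le_half_pow_of_decide_ne {c : ℝ} (hc₀ : 0 ≤ c) (hc₁ : c ≤ 1)
    {n k : ℕ} (hn : 0 < n) (hk : k ≤ n)
    (hwrong : decide (1 / 2 < (k : ℝ) / n) ≠ decide (1 / 2 < c)) :
    c ^ k * (1 - c) ^ (n - k) ≤ (1 / 2) ^ n := by
  have hnR : (0 : ℝ) < n := by exact_mod_cast hn
  by_cases hx : 1 / 2 < (k : ℝ) / n
  · have hc : c ≤ 1 / 2 := by
      by_contra hc
      exact hwrong (by rw [decide_eq_true hx, decide_eq_true (not_le.mp hc)])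
    have h2k : n ≤ 2 * k := by
      rw [lt_div_iff₀ hnR] at hx
      exact_mod_cast (by linarith : (n : ℝ) ≤ 2 * k)
    have := pow_mul_one_sub_pow_le_half_pow (c := 1 - c) (n := n) (k := n - k) (by linarith)
      (by linarith) (by omega)
    rwa [sub_sub_cancel, Nat.sub_sub_self hk, mul_comm] at this
  · have hc : 1 / 2 < c := by
      by_contra hc
      exact hwrong (by rw [decide_eq_false hx, decide_eq_false hc])
    have h2k : 2 * k ≤ n := by
      rw [not_lt, div_le_iff₀ hnR] at hx
      exact_mod_cast (by linarith : 2 * (k : ℝ) ≤ n)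
    exact pow_mul_one_sub_pow_le_half_pow hc.le hc₁ h2k

theorem half_pow_lt_of_log_lt_natCast_mul_klBer {α : ℝ} (hα : 0 < α) {n k : ℕ} (hn : 0 < n)
    (hk : k ≤ n) (hcross : log (2 * n / α) < n * klBer (k / n) (1 / 2)) :
    (1 / 2) ^ n < α / (2 * n * n.choose k) := by
  have hnR : (0 : ℝ) < n := by exact_mod_cast hn
  have hC : (0 : ℝ) < n.choose k := by exact_mod_cast Nat.choose_pos hk
  have hpos := empirical_pow_mul_one_sub_pow_pos hk
  have hlik : (1 / 2) ^ n * (2 * n / α) < ((k : ℝ) / n) ^ k * (1 - k / n) ^ (n - k) := by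
    rw [natCast_mul_klBer (by norm_num) (by norm_num) hk,
      show (1 : ℝ) - 1 / 2 = 1 / 2 by norm_num, ← pow_add, Nat.add_sub_cancel' hk] at hcross
    rw [← log_lt_log_iff (by positivity) hpos, log_mul (by positivity) (by positivity)]
    linarith
  have hbinom := choose_mul_pow_mul_one_sub_pow_le_one (x := k / n) (by positivity)
    ((div_le_one hnR).mpr (by exact_mod_cast hk)) hk
  rw [lt_div_iff₀ (by positivity)]
  calc (1 / 2) ^ n * (2 * n * n.choose k) = n.choose k * ((1 / 2) ^ n * (2 * n / α)) * α := by
        field_simp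
    _ < n.choose k * (((k : ℝ) / n) ^ k * (1 - k / n) ^ (n - k)) * α := by gcongr
    _ ≤ α := mul_le_of_le_one_left hα.le hbinom

theorem pow_mul_one_sub_pow_le_mul_betaWeight {c α : ℝ} (hc₀ : 0 ≤ c) (hc₁ : c ≤ 1)
    (hα : 0 < α) {n k : ℕ} (hn : 0 < n) (hk : k ≤ n)
    (hcross : log (2 * n / α) < n * klBer (k / n) (1 / 2))
    (hwrong : decide (1 / 2 < (k : ℝ) / n) ≠ decide (1 / 2 < c)) :
    c ^ k * (1 - c) ^ (n - k) ≤ α * betaWeight n k := by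
  have hn₁ : (1 : ℝ) ≤ n := by exact_mod_cast hn
  calc c ^ k * (1 - c) ^ (n - k) ≤ (1 / 2) ^ n :=
        pow_mul_one_sub_pow_le_half_pow_of_decide_ne hc₀ hc₁ hn hk hwrong
    _ ≤ α / (2 * n * n.choose k) := (half_pow_lt_of_log_lt_natCast_mul_klBer hα hn hk hcross).le
    _ ≤ α * betaWeight n k := by
        rw [betaWeight, ← div_eq_mul_inv]
        have := Nat.choose_pos hk
        gcongr
        linarith

def numOnes {n : ℕ} (v : Fin n → Bool) : ℕ := ∑ i, (v i).toNat

theorem card_filter_eq_numOnes {n : ℕ} (v : Fin n → Bool) : #{i | v i} = numOnes v := by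
  rw [card_filter]
  exact sum_congr rfl fun i _ => by cases v i <;> rfl

theorem numOnes_le {n : ℕ} (v : Fin n → Bool) : numOnes v ≤ n :=
  card_filter_eq_numOnes v ▸ (card_filter_le _ _).trans_eq (card_fin n)

theorem prod_ite_eq_pow_numOnes {M : Type*} [CommMonoid M] {n : ℕ} (v : Fin n → Bool)
    (a b : M) :
    ∏ i, (if v i then a else b) = a ^ numOnes v * b ^ (n - numOnes v) := by
  have hcard := card_filter_add_card_filter_not (s := univ) (p := fun i => v i = true)
  rw [card_univ, Fintype.card_fin, card_filter_eq_numOnes] at hcard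
  rw [prod_ite, prod_const, prod_const, card_filter_eq_numOnes]
  congr 2
  omega

theorem numOnes_snoc {n : ℕ} (v : Fin n → Bool) (b : Bool) :
    numOnes (Fin.snoc v b : Fin (n + 1) → Bool) = numOnes v + b.toNat := by
  simp [numOnes, Fin.sum_univ_castSucc]

noncomputable def mixtureWeight {n : ℕ} (v : Fin n → Bool) : ℝ≥0∞ :=
  ENNReal.ofReal (betaWeight n (numOnes v))

theorem sum_mixtureWeight_snoc {n : ℕ} (v : Fin n → Bool) :
    ∑ b, mixtureWeight (Fin.snoc v b : Fin (n + 1) → Bool) = mixtureWeight v := by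
  have hk := numOnes_le v
  simp only [mixtureWeight, Fintype.sum_bool, numOnes_snoc, Bool.toNat_true, Bool.toNat_false,
    add_zero]
  rw [← ENNReal.ofReal_add (betaWeight_pos (by omega)).le (betaWeight_pos (by omega)).le,
    add_comm, betaWeight_succ_add_betaWeight_succ hk]

theorem mixtureWeight_elim0 : mixtureWeight (Fin.elim0 : Fin 0 → Bool) = 1 := by
  simp [mixtureWeight, numOnes, betaWeight]

def CrossesThreshold (α : ℝ) {n : ℕ} (v : Fin n → Bool) : Prop :=
  2 ≤ n ∧ log (2 * n / α) < n * klBer (numOnes v / n) (1 / 2)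

open Classical in
noncomputable def errorStrings (c α : ℝ) (n : ℕ) : Finset (Fin n → Bool) :=
  {v | CrossesThreshold α v ∧ (∀ m (h : m < n), ¬ CrossesThreshold α (Fin.take m h.le v)) ∧
    decide (1 / 2 < (numOnes v : ℝ) / n) ≠ decide (1 / 2 < c)}

theorem prefixFree_errorStrings (c α : ℝ) : PrefixFree (errorStrings c α) := by
  intro m n h w hw hm
  simp only [errorStrings, mem_filter, mem_univ, true_and] at hw hm
  exact hw.2.1 m h hm.1

theorem tsum_sum_mixtureWeight_errorStrings_le_one (c α : ℝ) :
    ∑' n, ∑ v ∈ errorStrings c α n, mixtureWeight v ≤ 1 :=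
  mixtureWeight_elim0 ▸ tsum_sum_le_of_prefixFree (fun _ => sum_mixtureWeight_snoc)
    (prefixFree_errorStrings c α)

section Observations

variable {Ω : Type*}

/-- Observations are indexed from `1`, so coordinate `i` records whether `X (i + 1) ω = 1`. -/
noncomputable def firstObs (X : ℕ → Ω → ℝ) (n : ℕ) (ω : Ω) : Fin n → Bool :=
  fun i => decide (X (i + 1) ω = 1)

theorem empMean_eq_numOnes_firstObs {X : ℕ → Ω → ℝ} {ω : Ω}
    (hω : ∀ j, X j ω = 0 ∨ X j ω = 1) (n : ℕ) :
    empMean X n ω = numOnes (firstObs X n ω) / n := by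
  rw [empMean, one_div_mul_eq_div, sum_Icc_one_eq_sum_fin]
  push_cast [numOnes]
  congr 1
  refine sum_congr rfl fun i _ => ?_
  rcases hω (i + 1) with h | h <;> simp [firstObs, h]

theorem firstObs_mem_errorStrings {X : ℕ → Ω → ℝ} {c α : ℝ} {ω : Ω}
    (hω : ∀ j, X j ω = 0 ∨ X j ω = 1) {n : ℕ} (hτ : chernoffTau X α ω = n)
    (hwrong : decide (1 / 2 < empMean X n ω) ≠ decide (1 / 2 < c)) :
    firstObs X n ω ∈ errorStrings c α n := by
  have hcross : ∀ m, CrossesThreshold α (firstObs X m ω) ↔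
      2 ≤ m ∧ log (2 * m / α) < m * klBer (empMean X m ω) (1 / 2) := fun m => by
    rw [CrossesThreshold, empMean_eq_numOnes_firstObs hω]
  obtain ⟨hn, hmin⟩ := isLeast_of_sInf_eq_natCast hτ
  simp only [errorStrings, mem_filter, mem_univ, true_and]
  refine ⟨(hcross n).mpr hn, fun m hm hc => hm.not_ge (hmin ((hcross m).mp hc)), ?_⟩
  rwa [← empMean_eq_numOnes_firstObs hω]

variable [MeasurableSpace Ω]

theorem ae_eq_zero_or_eq_one {P : Measure Ω} {Y : Ω → ℝ} (hY : Measurable Y) {c : ℝ}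
    (hYc : P.map Y = bern c) : ∀ᵐ ω ∂P, Y ω = 0 ∨ Y ω = 1 := by
  refine ae_of_ae_map (p := fun y => y = 0 ∨ y = 1) hY.aemeasurable ?_
  rw [hYc, ae_iff]
  simp [bern]

theorem measure_firstObs_preimage_singleton {P : Measure Ω} {X : ℕ → Ω → ℝ}
    (hmeas : ∀ n, Measurable (X n)) (hindep : iIndepFun X P) {c : ℝ}
    (hdist : ∀ n, P.map (X n) = bern c) (hc₀ : 0 ≤ c) (hc₁ : c ≤ 1) {n : ℕ}
    (v : Fin n → Bool) :
    P (firstObs X n ⁻¹' {v}) = ENNReal.ofReal (c ^ numOnes v * (1 - c) ^ (n - numOnes v)) := by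
  have hA : ∀ b : Bool, MeasurableSet {x : ℝ | decide (x = 1) = b} := by
    intro b
    cases b <;> simp [← Set.compl_ofPred]
  have hset : firstObs X n ⁻¹' {v} = ⋂ i ∈ (Finset.univ : Finset (Fin n)),
      X (i + 1) ⁻¹' {x | decide (x = 1) = v i} := by
    ext ω
    simp [firstObs, funext_iff]
  have hcoord : ∀ i : Fin n, P (X (i + 1) ⁻¹' {x | decide (x = 1) = v i}) =
      ENNReal.ofReal (if v i then c else 1 - c) := by
    intro i
    rw [← Measure.map_apply (hmeas _) (hA (v i)), hdist]
    cases v i <;> simp [bern]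
  have hinj : Function.Injective fun i : Fin n => (i : ℕ) + 1 := fun i j hij =>
    Fin.ext (Nat.add_right_cancel hij)
  rw [hset, (hindep.precomp hinj).measure_inter_preimage_eq_mul _ fun i _ => hA (v i)]
  simp only [hcoord]
  rw [← ENNReal.ofReal_prod_of_nonneg fun i _ => by split_ifs <;> linarith,
    prod_ite_eq_pow_numOnes]

theorem measure_firstObs_preimage_singleton_le {P : Measure Ω} {X : ℕ → Ω → ℝ}
    (hmeas : ∀ n, Measurable (X n)) (hindep : iIndepFun X P) {c α : ℝ}
    (hdist : ∀ n, P.map (X n) = bern c) (hc₀ : 0 ≤ c) (hc₁ : c ≤ 1) (hα : 0 < α)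
    {n : ℕ} {v : Fin n → Bool} (hv : v ∈ errorStrings c α n) :
    P (firstObs X n ⁻¹' {v}) ≤ ENNReal.ofReal α * mixtureWeight v := by
  simp only [errorStrings, mem_filter, mem_univ, true_and] at hv
  obtain ⟨⟨hn, hcross⟩, -, hwrong⟩ := hv
  rw [measure_firstObs_preimage_singleton hmeas hindep hdist hc₀ hc₁, mixtureWeight,
    ← ENNReal.ofReal_mul hα.le]
  exact ENNReal.ofReal_le_ofReal <| pow_mul_one_sub_pow_le_mul_betaWeight hc₀ hc₁ hα
    (by omega) (numOnes_le v) hcross hwrong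

end Observations

end ChernoffStopping

open ChernoffStopping

theorem stmt_2_general {Ω : Type*} [MeasurableSpace Ω] (P : Measure Ω)
    (c : ℝ) (hc : c ∈ Set.Ioo (0 : ℝ) 1)
    (α : ℝ) (hα : α ∈ Set.Ioo (0 : ℝ) 1)
    (X : ℕ → Ω → ℝ) (hmeas : ∀ n, Measurable (X n))
    (hindep : iIndepFun X P)
    (hdist : ∀ n, Measure.map (X n) P = bern c) :
    P {ω | ∃ n : ℕ, chernoffTau X α ω = (n : ℕ∞) ∧
        decide (1/2 < empMean X n ω) ≠ decide (1/2 < c)} ≤ ENNReal.ofReal α := by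
  have hbin : ∀ᵐ ω ∂P, ∀ j, X j ω = 0 ∨ X j ω = 1 :=
    ae_all_iff.mpr fun j => ae_eq_zero_or_eq_one (hmeas j) (hdist j)
  calc P {ω | ∃ n : ℕ, chernoffTau X α ω = n ∧
        decide (1/2 < empMean X n ω) ≠ decide (1/2 < c)}
      ≤ P (⋃ n, ⋃ v ∈ errorStrings c α n, firstObs X n ⁻¹' {v}) :=
        measure_mono_ae <| hbin.mono fun ω hω ⟨n, hτ, hwrong⟩ =>
          Set.mem_iUnion.mpr ⟨n, Set.mem_biUnion (firstObs_mem_errorStrings hω hτ hwrong) rfl⟩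
    _ ≤ ∑' n, ∑ v ∈ errorStrings c α n, P (firstObs X n ⁻¹' {v}) :=
        (measure_iUnion_le _).trans (ENNReal.tsum_le_tsum fun n => measure_biUnion_finset_le _ _)
    _ ≤ ∑' n, ∑ v ∈ errorStrings c α n, ENNReal.ofReal α * mixtureWeight v := by
        gcongr with n v hv
        exact measure_firstObs_preimage_singleton_le hmeas hindep hdist hc.1.le hc.2.le hα.1 hv
    _ ≤ ENNReal.ofReal α := by
        simp_rw [← mul_sum, ENNReal.tsum_mul_left]
        exact mul_le_of_le_one_right' (tsum_sum_mixtureWeight_errorStrings_le_one c α)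

/-- Correctness of the Chernoff stopping rule (first part of Lemma 2): for i.i.d.
Bernoulli(c) observations, the probability that `τ < ∞` and the final decision
`𝟙(ĉ_τ > 1/2)` differs from `𝟙(c > 1/2)` is at most `α`. -/
theorem stmt_2 {Ω : Type*} [MeasurableSpace Ω] (P : Measure Ω) [IsProbabilityMeasure P]
    (c : ℝ) (hc : c ∈ Set.Ioo (0 : ℝ) 1) (hc' : c ≠ 1/2)
    (α : ℝ) (hα : α ∈ Set.Ioo (0 : ℝ) 1)
    (X : ℕ → Ω → ℝ) (hmeas : ∀ n, Measurable (X n))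
    (hindep : iIndepFun X P)
    (hdist : ∀ n, Measure.map (X n) P = bern c) :
    P {ω | ∃ n : ℕ, chernoffTau X α ω = (n : ℕ∞) ∧
        decide (1/2 < empMean X n ω) ≠ decide (1/2 < c)} ≤ ENNReal.ofReal α :=
  stmt_2_general P c hc α hα X hmeas hindep hdist
end

section
/- Let c ∈ (0,1) with c ≠ 1/2, and let (X_n)_{n≥1} be i.i.d. Bernoulli(c). For t ≥ 1 let ĉ_t := (1/t)·∑_{i=1}^t X_i, and for each α ∈ (0,1) define the Chernoff stopping time τ_α := inf{ t ≥ 2 : t · d(ĉ_t, 1/2) > log(2t/α) } (with the convention d(0,1/2) = d(1,1/2) = log 2). Then almost surely, limsup_{α ↓ 0} τ_α / log(1/α) ≤ 1 / d(c, 1/2). -/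
/-!
By the strong law of large numbers `ĉ_t → c` almost surely, so by continuity of `d(·, 1/2)`
at `c`, eventually `d(ĉ_t, 1/2) > d'` for any `d' < d(c, 1/2)`. Given `r > 1/d'`, the time
`n = ⌊r log(1/α)⌋` satisfies the stopping condition `log(2n) + log(1/α) < n d(ĉ_n, 1/2)`
for all small `α`, because `log(2n) = o(n)` and `log(1/α) < (n + 1)/r`. Hence
`τ_α ≤ r log(1/α)` for all small `α`.
-/

open MeasureTheory ProbabilityTheory Filter
open scoped ENNReal Topology

open InformationTheory

lemma klBer_eq_klFun (p : ℝ) {q : ℝ} (hq0 : q ≠ 0) (hq1 : q ≠ 1) :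
    klBer p q = q * klFun (p / q) + (1 - q) * klFun ((1 - p) / (1 - q)) := by
  have : 1 - q ≠ 0 := sub_ne_zero.mpr hq1.symm
  simp only [klBer, klFun_apply]
  field_simp
  ring

lemma klBer_pos {p q : ℝ} (hp : p ∈ Set.Icc (0 : ℝ) 1) (hq : q ∈ Set.Ioo (0 : ℝ) 1)
    (hpq : p ≠ q) : 0 < klBer p q := by
  obtain ⟨hp0, hp1⟩ := hp
  obtain ⟨hq0, hq1⟩ := hq
  have hfirst : 0 < klFun (p / q) := by
    refine (klFun_nonneg (by positivity)).lt_of_ne' fun h => hpq ?_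
    rwa [klFun_eq_zero_iff (by positivity), div_eq_one_iff_eq hq0.ne'] at h
  have hsecond : 0 ≤ klFun ((1 - p) / (1 - q)) :=
    klFun_nonneg (div_nonneg (by linarith) (by linarith))
  rw [klBer_eq_klFun p hq0.ne' hq1.ne]
  exact add_pos_of_pos_of_nonneg (mul_pos hq0 hfirst) (mul_nonneg (by linarith) hsecond)

lemma klBer_continuousAt {p q : ℝ} (hp : p ∈ Set.Ioo (0 : ℝ) 1) (hq0 : q ≠ 0) (hq1 : q ≠ 1) :
    ContinuousAt (fun x => klBer x q) p := by
  obtain ⟨hp0, hp1⟩ := hp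
  have h1 : p / q ≠ 0 := div_ne_zero hp0.ne' hq0
  have h2 : (1 - p) / (1 - q) ≠ 0 := div_ne_zero (by linarith) (sub_ne_zero.mpr hq1.symm)
  unfold klBer
  fun_prop (disch := assumption)

lemma eventually_log_mul_add_lt_mul {a : ℝ} (ha : 0 < a) (b : ℝ) {γ : ℝ} (hγ : 0 < γ) :
    ∀ᶠ x : ℝ in atTop, Real.log (a * x) + b < γ * x := by
  have hlittle : (fun x => Real.log (a * x) + b) =o[atTop] id := by
    refine ((Asymptotics.isLittleO_const_id_atTop (Real.log a + b)).add
      Real.isLittleO_log_id_atTop).congr' ?_ EventuallyEq.rfl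
    filter_upwards [eventually_gt_atTop 0] with x hx
    rw [Real.log_mul ha.ne' hx.ne']
    ring
  filter_upwards [hlittle.def (half_pos hγ), eventually_gt_atTop 0] with x hle hx
  rw [id, Real.norm_of_nonneg hx.le] at hle
  linarith [Real.le_norm_self (Real.log (a * x) + b), mul_pos hγ hx]

lemma integrable_id_dirac (a : ℝ) : Integrable (fun x : ℝ => x) (Measure.dirac a) :=
  integrable_dirac (by simp)

lemma integrable_id_bern (p : ℝ) : Integrable (fun x : ℝ => x) (bern p) :=
  ((integrable_id_dirac 1).smul_measure ENNReal.ofReal_ne_top).add_measure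
    ((integrable_id_dirac 0).smul_measure ENNReal.ofReal_ne_top)

lemma integral_id_bern {p : ℝ} (hp : 0 ≤ p) : ∫ x, x ∂(bern p) = p := by
  rw [bern, integral_add_measure ((integrable_id_dirac 1).smul_measure ENNReal.ofReal_ne_top)
      ((integrable_id_dirac 0).smul_measure ENNReal.ofReal_ne_top),
    integral_smul_measure, integral_smul_measure, integral_dirac, integral_dirac]
  simp [ENNReal.toReal_ofReal hp]

lemma ae_tendsto_empMean {Ω : Type*} [MeasurableSpace Ω] {P : Measure Ω} {X : ℕ → Ω → ℝ}
    (hint : Integrable (X 1) P) (hindep : Pairwise fun i j => X i ⟂ᵢ[P] X j)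
    (hident : ∀ i, IdentDistrib (X i) (X 1) P P) :
    ∀ᵐ ω ∂P, Tendsto (fun t => empMean X t ω) atTop (𝓝 P[X 1]) := by
  have hshift := strong_law_ae_real (fun i => X (i + 1)) hint
    (fun i j hij => hindep (by omega)) (fun i => hident (i + 1))
  filter_upwards [hshift] with ω hω
  refine hω.congr fun t => ?_
  rw [empMean, ← Finset.Ico_add_one_right_eq_Icc, Finset.sum_Ico_eq_sum_range, one_div,
    inv_mul_eq_div]
  simp only [add_comm 1, Nat.add_sub_cancel]

lemma chernoffTau_le {Ω : Type*} {X : ℕ → Ω → ℝ} {α : ℝ} {ω : Ω} {n : ℕ} (hn : 2 ≤ n)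
    (hstop : Real.log (2 * n / α) < n * klBer (empMean X n ω) (1/2)) :
    chernoffTau X α ω ≤ n :=
  sInf_le ⟨n, rfl, hn, hstop⟩

lemma tendsto_log_one_div_nhdsGT_zero :
    Tendsto (fun α : ℝ => Real.log (1 / α)) (𝓝[>] 0) atTop := by
  simpa only [one_div, Real.log_inv, Function.comp_def] using
    tendsto_neg_atBot_atTop.comp Real.tendsto_log_nhdsGT_zero

lemma chernoffTau_div_log_eventually_le {Ω : Type*} {X : ℕ → Ω → ℝ} {ω : Ω} {d r : ℝ}
    (hr : 0 < r) (hrd : 1 / r < d) (hkl : ∀ᶠ t in atTop, d < klBer (empMean X t ω) (1/2)) :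
    ∀ᶠ α in 𝓝[>] (0 : ℝ),
      (chernoffTau X α ω : ℝ≥0∞) / ENNReal.ofReal (Real.log (1 / α)) ≤ ENNReal.ofReal r := by
  have hgap : 0 < d - 1 / r := sub_pos.mpr hrd
  -- `n = ⌊r L⌋₊` satisfies the stopping condition as soon as `log (2n) + 1/r < (d - 1/r) n`,
  -- because `L < (n + 1) / r`.
  have hgood : ∀ᶠ n : ℕ in atTop,
      2 ≤ n ∧ d < klBer (empMean X n ω) (1/2) ∧ Real.log (2 * n) + 1 / r < (d - 1 / r) * n :=
    (eventually_ge_atTop 2).and (hkl.and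
      (tendsto_natCast_atTop_atTop.eventually (eventually_log_mul_add_lt_mul two_pos _ hgap)))
  have hfloor : Tendsto (fun α : ℝ => ⌊r * Real.log (1 / α)⌋₊) (𝓝[>] 0) atTop :=
    tendsto_nat_floor_atTop.comp (tendsto_log_one_div_nhdsGT_zero.const_mul_atTop hr)
  filter_upwards [hfloor.eventually hgood, self_mem_nhdsWithin,
    tendsto_log_one_div_nhdsGT_zero.eventually (eventually_gt_atTop 0)]
    with α ⟨hn2, hnkl, hnlog⟩ hα hL
  set L := Real.log (1 / α)
  set n := ⌊r * L⌋₊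
  have hn0 : (0 : ℝ) < n := by norm_cast; omega
  have hnle : (n : ℝ) ≤ r * L := Nat.floor_le (by positivity)
  have hLlt : L < (n + 1) / r := by
    rw [lt_div_iff₀ hr, mul_comm]
    exact Nat.lt_floor_add_one _
  have hstop : Real.log (2 * n / α) < n * klBer (empMean X n ω) (1/2) := by
    have hsplit : Real.log (2 * n / α) = Real.log (2 * n) + L := by
      rw [div_eq_mul_one_div, Real.log_mul (by positivity) (by simpa using hα.ne')]
    have : (d - 1 / r) * n + (n + 1) / r = n * d + 1 / r := by ring
    rw [hsplit]
    linarith [mul_lt_mul_of_pos_left hnkl hn0]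
  refine ENNReal.div_le_of_le_mul ?_
  calc (chernoffTau X α ω : ℝ≥0∞)
      ≤ (n : ℝ≥0∞) := by exact_mod_cast ENat.toENNReal_le.mpr (chernoffTau_le hn2 hstop)
    _ ≤ ENNReal.ofReal r * ENNReal.ofReal L := by
      rw [← ENNReal.ofReal_mul hr.le, ← ENNReal.ofReal_natCast]
      exact ENNReal.ofReal_le_ofReal hnle

lemma limsup_chernoffTau_div_log_le {Ω : Type*} {X : ℕ → Ω → ℝ} {ω : Ω} {d : ℝ} (hd : 0 < d)
    (hkl : Tendsto (fun t => klBer (empMean X t ω) (1/2)) atTop (𝓝 d)) :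
    limsup (fun α : ℝ => (chernoffTau X α ω : ℝ≥0∞) / ENNReal.ofReal (Real.log (1 / α)))
      (𝓝[>] (0 : ℝ)) ≤ ENNReal.ofReal (1 / d) := by
  refine ENNReal.le_of_forall_pos_le_add fun ε hε _ => ?_
  set r := 1 / d + (ε : ℝ)
  have hr : 0 < r := by positivity
  obtain ⟨d', hrd', hd'⟩ : ∃ d', 1 / r < d' ∧ d' < d :=
    exists_between ((one_div_lt hr hd).mpr (lt_add_of_pos_right _ (by positivity)))
  calc limsup _ (𝓝[>] (0 : ℝ))
      ≤ ENNReal.ofReal r :=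
        limsup_le_of_le (h := chernoffTau_div_log_eventually_le hr hrd'
          (hkl.eventually_const_lt hd'))
    _ = ENNReal.ofReal (1 / d) + ε := by
      rw [ENNReal.ofReal_add (by positivity) ε.coe_nonneg, ENNReal.ofReal_coe_nnreal]

theorem stmt_3_general {Ω : Type*} [MeasurableSpace Ω] (P : Measure Ω)
    (c : ℝ) (hc : c ∈ Set.Ioo (0 : ℝ) 1) (hc' : c ≠ 1/2)
    (X : ℕ → Ω → ℝ) (hmeas : ∀ n, Measurable (X n))
    (hindep : iIndepFun X P)
    (hdist : ∀ n, Measure.map (X n) P = bern c) :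
    ∀ᵐ ω ∂P,
      Filter.limsup
        (fun α : ℝ => (chernoffTau X α ω : ℝ≥0∞) / ENNReal.ofReal (Real.log (1 / α)))
        (𝓝[>] (0 : ℝ)) ≤ ENNReal.ofReal (1 / klBer c (1/2)) := by
  have hident (n : ℕ) : IdentDistrib (X n) id P (bern c) :=
    ⟨(hmeas n).aemeasurable, aemeasurable_id, by rw [hdist, Measure.map_id]⟩
  have hmean : P[X 1] = c := (hident 1).integral_eq.trans (integral_id_bern hc.1.le)
  have hSLLN := ae_tendsto_empMean ((hident 1).integrable_iff.mpr (integrable_id_bern c))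
    (fun i j hij => hindep.indepFun hij) (fun n => (hident n).trans (hident 1).symm)
  filter_upwards [hSLLN] with ω hω
  rw [hmean] at hω
  exact limsup_chernoffTau_div_log_le (klBer_pos (Set.Ioo_subset_Icc_self hc) (by norm_num) hc')
    ((klBer_continuousAt hc (by norm_num) (by norm_num)).tendsto.comp hω)

/-- Asymptotic optimality of the Chernoff stopping rule (second part of Lemma 2):
almost surely, `limsup_{α ↓ 0} τ_α / log(1/α) ≤ 1 / d(c, 1/2)`. -/
theorem stmt_3 {Ω : Type*} [MeasurableSpace Ω] (P : Measure Ω) [IsProbabilityMeasure P]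
    (c : ℝ) (hc : c ∈ Set.Ioo (0 : ℝ) 1) (hc' : c ≠ 1/2)
    (X : ℕ → Ω → ℝ) (hmeas : ∀ n, Measurable (X n))
    (hindep : iIndepFun X P)
    (hdist : ∀ n, Measure.map (X n) P = bern c) :
    ∀ᵐ ω ∂P,
      Filter.limsup
        (fun α : ℝ => (chernoffTau X α ω : ℝ≥0∞) / ENNReal.ofReal (Real.log (1 / α)))
        (𝓝[>] (0 : ℝ)) ≤ ENNReal.ofReal (1 / klBer c (1/2)) :=
  stmt_3_general P c hc hc' X hmeas hindep hdist
end

section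
/- For every x ∈ (1/2, 1) and every y ≥ 0: d(1/2, x) ≥ y if and only if x ≥ (1 + √(1 − e^{−2y})) / 2. -/
/-- For every `x ∈ (1/2, 1)` and every `y ≥ 0`:
`d(1/2, x) ≥ y ↔ x ≥ (1 + √(1 - e^{-2y})) / 2`. -/
theorem stmt_9 (x y : ℝ) (hx : x ∈ Set.Ioo (1/2 : ℝ) 1) (hy : 0 ≤ y) :
    y ≤ klBer (1/2) x ↔ (1 + Real.sqrt (1 - Real.exp (-2 * y))) / 2 ≤ x := by
  obtain ⟨hx1, hx2⟩ := hx
  have hxpos : (0:ℝ) < x := by linarith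
  have h1x : (0:ℝ) < 1 - x := by linarith
  have hprod : (0:ℝ) < 4 * (x * (1 - x)) := by positivity
  have hE : Real.exp (-2 * y) ≤ 1 := Real.exp_le_one_iff.mpr (by linarith)
  have hE0 : (0:ℝ) < Real.exp (-2 * y) := Real.exp_pos _
  have hkl : klBer (1/2) x = -(1/2) * Real.log (4 * (x * (1 - x))) := by
    have h4 : Real.log 4 = 2 * Real.log 2 := by
      rw [show (4:ℝ) = 2^2 by norm_num, Real.log_pow]; push_cast; ring
    have hh : Real.log (1/2) = -Real.log 2 := by
      rw [Real.log_div one_ne_zero two_ne_zero, Real.log_one]; ring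
    unfold klBer
    rw [Real.log_mul (by norm_num) (by positivity),
        Real.log_mul (ne_of_gt hxpos) (ne_of_gt h1x), h4,
        show (1:ℝ)/2/x = (1/2) * x⁻¹ by ring,
        show (1-(1:ℝ)/2)/(1-x) = (1/2) * (1-x)⁻¹ by ring,
        Real.log_mul (by norm_num) (by positivity),
        Real.log_mul (by norm_num) (by positivity),
        Real.log_inv, Real.log_inv, hh]
    ring
  have h1 : y ≤ klBer (1/2) x ↔ 4 * (x * (1 - x)) ≤ Real.exp (-2 * y) := by
    rw [hkl, ← Real.log_le_iff_le_exp hprod]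
    constructor <;> intro h <;> linarith
  have hs : 0 ≤ 1 - Real.exp (-2 * y) := by linarith
  have h2 : (1 + Real.sqrt (1 - Real.exp (-2 * y))) / 2 ≤ x ↔
      1 - Real.exp (-2 * y) ≤ (2 * x - 1) ^ 2 := by
    constructor
    · intro h
      have h3 : Real.sqrt (1 - Real.exp (-2 * y)) ≤ 2 * x - 1 := by linarith
      nlinarith [Real.sq_sqrt hs, Real.sqrt_nonneg (1 - Real.exp (-2 * y))]
    · intro h
      have h3 : Real.sqrt (1 - Real.exp (-2 * y)) ≤ 2 * x - 1 := by
        calc _ ≤ Real.sqrt ((2*x-1)^2) := Real.sqrt_le_sqrt h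
          _ = 2 * x - 1 := Real.sqrt_sq (by linarith)
      linarith
  rw [h1, h2]
  constructor <;> intro h <;> nlinarith
end

section
/- Let H(y) := −y·log y − (1−y)·log(1−y) be the binary entropy function (natural logarithm). For every x ∈ (0, log 2] and every y ∈ (0, 1/2] with H(y) = x, it holds that x / (2·log(6/x)) ≤ y ≤ x / log(1/x). -/
/-- The binary entropy function (natural logarithm). -/
noncomputable def binEnt (y : ℝ) : ℝ := -y * Real.log y - (1 - y) * Real.log (1 - y)

/-!
Writing `H(y) = y log(1/y) - (1 - y) log(1 - y)`, the second term lies between `y (1 - y)` and `y`,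
so `y log(1/y) ≤ H(y) ≤ y (1 + log(1/y))` and in particular `y ≤ H(y)` on `(0, 1/2]`. The upper
bound on `y` follows from `log(1/H(y)) ≤ log(1/y)`. For the lower bound, `(1 + t)² ≤ 4 eᵗ` with
`t = log(1/y)` gives `H(y)² ≤ 4y`, whence `1 + log(1/y) ≤ log(9/y) ≤ log(36/H(y)²) = 2 log(6/H(y))`.
-/

open Real

lemma neg_mul_log_one_sub_le {y : ℝ} (hy : y < 1) : -(1 - y) * log (1 - y) ≤ y := by
  have h1y : 0 < 1 - y := by linarith
  have h := one_sub_inv_le_log_of_pos h1y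
  have : (1 - y) * (1 - (1 - y)⁻¹) = -y := by field_simp; ring
  nlinarith [mul_le_mul_of_nonneg_left h h1y.le]

lemma mul_one_sub_le_neg_mul_log_one_sub {y : ℝ} (hy : y < 1) :
    y * (1 - y) ≤ -(1 - y) * log (1 - y) := by
  have h1y : 0 < 1 - y := by linarith
  nlinarith [mul_le_mul_of_nonneg_left (log_le_sub_one_of_pos h1y) h1y.le]

lemma binEnt_le {y : ℝ} (hy : y < 1) : binEnt y ≤ y * (1 - log y) := by
  have := neg_mul_log_one_sub_le hy
  unfold binEnt
  linarith

lemma le_binEnt {y : ℝ} (hy : y < 1) : y * (1 - y - log y) ≤ binEnt y := by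
  have := mul_one_sub_le_neg_mul_log_one_sub hy
  unfold binEnt
  linarith

lemma le_binEnt_of_le_half {y : ℝ} (hy0 : 0 < y) (hy : y ≤ 1 / 2) : y ≤ binEnt y := by
  have hlog : log 2 ≤ -log y := by
    rw [← log_inv]
    exact log_le_log two_pos ((le_inv_comm₀ two_pos hy0).2 (by linarith))
  have := le_binEnt (y := y) (by linarith)
  nlinarith [log_two_gt_d9]

lemma one_add_sq_le_four_mul_exp {t : ℝ} (ht : -3 / 2 ≤ t) : (1 + t) ^ 2 ≤ 4 * exp t := by
  have h := add_one_le_exp (t / 2)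
  have hsq : exp (t / 2) ^ 2 = exp t := by rw [← exp_nat_mul]; ring_nf
  nlinarith [pow_le_pow_left₀ (by linarith) h 2]

lemma mul_one_sub_log_sq_le {y : ℝ} (hy0 : 0 < y) (hy : y ≤ 1) :
    y * (1 - log y) ^ 2 ≤ 4 := by
  have h := one_add_sq_le_four_mul_exp (t := -log y) (by linarith [log_nonpos hy0.le hy])
  rw [exp_neg, exp_log hy0, ← sub_eq_add_neg] at h
  calc y * (1 - log y) ^ 2 ≤ y * (4 * y⁻¹) := mul_le_mul_of_nonneg_left h hy0.le
    _ = 4 := by field_simp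

lemma mul_log_one_div_binEnt_le {y : ℝ} (hy0 : 0 < y) (hy : y ≤ 1 / 2) :
    y * log (1 / binEnt y) ≤ binEnt y := by
  have hyx := le_binEnt_of_le_half hy0 hy
  have hlog : log (1 / binEnt y) ≤ -log y := by
    rw [← log_inv, one_div]
    exact log_le_log (inv_pos.2 (hy0.trans_le hyx)) (inv_anti₀ hy0 hyx)
  nlinarith [le_binEnt (y := y) (by linarith)]

lemma binEnt_le_two_mul_log_six_div {y : ℝ} (hy0 : 0 < y) (hy : y ≤ 1 / 2) :
    binEnt y ≤ y * (2 * log (6 / binEnt y)) := by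
  set x := binEnt y
  have hx0 : 0 < x := hy0.trans_le (le_binEnt_of_le_half hy0 hy)
  have hxle : x ≤ y * (1 - log y) := binEnt_le (by linarith)
  have hx2 : x ^ 2 ≤ 4 * y := by
    have := mul_one_sub_log_sq_le hy0 (by linarith)
    nlinarith [pow_le_pow_left₀ hx0.le hxle 2]
  have hlog : 1 - log y ≤ 2 * log (6 / x) := by
    have h9 : 1 ≤ log 9 := by
      rw [le_log_iff_exp_le (by norm_num)]; linarith [exp_one_lt_d9]
    have hmono : log (9 / y) ≤ log ((6 / x) ^ 2) :=
      log_le_log (by positivity) (by rw [div_pow, div_le_div_iff₀ hy0 (by positivity)]; linarith)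
    rw [log_div (by norm_num) hy0.ne', log_pow] at hmono
    push_cast at hmono
    linarith
  nlinarith

/-- For every `x ∈ (0, log 2]` and `y ∈ (0, 1/2]` with `H(y) = x`:
`x / (2 log (6/x)) ≤ y ≤ x / log (1/x)`. -/
theorem stmt_11 (x y : ℝ) (hx : x ∈ Set.Ioc (0 : ℝ) (Real.log 2))
    (hy : y ∈ Set.Ioc (0 : ℝ) (1/2)) (hxy : binEnt y = x) :
    x / (2 * Real.log (6 / x)) ≤ y ∧ y ≤ x / Real.log (1 / x) := by
  obtain ⟨hx0, hx2⟩ := hx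
  obtain ⟨hy0, hy2⟩ := hy
  subst hxy
  constructor
  · have h := binEnt_le_two_mul_log_six_div hy0 hy2
    have hlog : 0 < 2 * log (6 / binEnt y) := pos_of_mul_pos_right (hx0.trans_le h) hy0.le
    rwa [div_le_iff₀ hlog]
  · have hx1 : binEnt y < 1 := hx2.trans_lt (by linarith [log_two_lt_d9])
    rw [le_div_iff₀ (log_pos (by rw [lt_div_iff₀ hx0]; linarith))]
    exact mul_log_one_div_binEnt_le hy0 hy2
end
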